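/- arXiv:1606.08014 — 3 statements merged into one kernel-verified Lean document; each statement's English description precedes it below -/
import Mathlib

section
/- Let G = (V, E) be a graph with E nonempty and let k ≥ 2. Construct the graph H whose vertex set is the disjoint union of: (a) sets {new(i)} ∪ V(i) for i ∈ [k], where each V(i) is a disjoint copy of V; (b) sets {i}×{j}×V(i)×V(j) for 1 ≤ i < j ≤ k; (c) sets {new(i,j)} ∪ E(i,j) for 1 ≤ i < j ≤ k, where each E(i,j) is a disjoint copy of E. The edges of H are: each {new(i)} ∪ V(i) forms a clique; each {new(i,j)} ∪ E(i,j) forms a clique; and for each vertex (i,j,u(i),v(j)) in a type-(b) set, there is an edge to every u'(i) ∈ V(i) with u ≠ u', an edge to every v'(j) ∈ V(j) with v ≠ v', and, if {u,v} ∈ E, an edge to the copy {u,v}(i,j) ∈ E(i,j). Then G has a clique of size k if and only if H has a dominating set of size k + C(k,2). -/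
/-- Pairs `i < j` of indices in `[k]`. -/
abbrev IdxPair (k : ℕ) := {p : Fin k × Fin k // p.1 < p.2}

/-- The vertex set of the graph `H` of the clique-to-dominating-set reduction:
(a) `{new(i)} ∪ V(i)` for `i ∈ [k]` (`none` is `new(i)`, `some v` is the copy `v(i)`);
(b) `{i}×{j}×V(i)×V(j)` for `i < j`;
(c) `{new(i,j)} ∪ E(i,j)` for `i < j` (`none` is `new(i,j)`, `some e` is the copy `e(i,j)`). -/
def HVert {V : Type*} (G : SimpleGraph V) (k : ℕ) : Type _ :=
  (Fin k × Option V) ⊕ ((IdxPair k × V × V) ⊕ (IdxPair k × Option G.edgeSet))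

/-- The (one-directional) edge relation of `H`. -/
def Hrel {V : Type*} (G : SimpleGraph V) (k : ℕ) : HVert G k → HVert G k → Prop
  | Sum.inl (i, _), Sum.inl (i', _) => i = i'
  | Sum.inr (Sum.inr (p, _)), Sum.inr (Sum.inr (p', _)) => p = p'
  | Sum.inr (Sum.inl (p, u, v)), Sum.inl (i, some w) =>
      (i = p.1.1 ∧ w ≠ u) ∨ (i = p.1.2 ∧ w ≠ v)
  | Sum.inr (Sum.inl (p, u, v)), Sum.inr (Sum.inr (p', some e)) =>
      p = p' ∧ (e : Sym2 V) = s(u, v)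
  | _, _ => False

/-- The graph `H` of the reduction (symmetrization of `Hrel`). -/
def HGraph {V : Type*} (G : SimpleGraph V) (k : ℕ) : SimpleGraph (HVert G k) :=
  SimpleGraph.fromRel (Hrel G k)

lemma card_idxPair (k : ℕ) : Fintype.card (IdxPair k) = k.choose 2 := by
  have e : IdxPair k ≃ Σ j : Fin k, Fin j.val :=
    { toFun := fun p => ⟨p.1.2, ⟨p.1.1, p.2⟩⟩
      invFun := fun x => ⟨(⟨x.2.1, x.2.2.trans x.1.2⟩, x.1), x.2.2⟩
      left_inv := fun p => rfl
      right_inv := fun x => rfl }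
  rw [Fintype.card_congr e, Fintype.card_sigma]
  simp only [Fintype.card_fin]
  rw [Nat.choose_two_right, ← Finset.sum_range_id]
  exact (Finset.sum_range fun i => (i : ℕ)) ▸ Fin.sum_univ_eq_sum_range (fun i => i) k

instance {V : Type*} [DecidableEq V] (G : SimpleGraph V) (k : ℕ) :
    DecidableEq (HVert G k) := by unfold HVert; exact instDecidableEqSum

attribute [reducible] HVert

/-- The "class" of a vertex of `H`: which of the `k + C(k,2)` distinguished cliques it
belongs to (`none` for the type-(b) vertices). -/
def cls {V : Type*} (G : SimpleGraph V) (k : ℕ) : HVert G k → Option (Fin k ⊕ IdxPair k)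
  | Sum.inl (i, _) => some (Sum.inl i)
  | Sum.inr (Sum.inl _) => none
  | Sum.inr (Sum.inr (p, _)) => some (Sum.inr p)

/-- Correctness of the clique-to-dominating-set reduction: for a graph `G` with at least one
edge and `k ≥ 2`, `G` has a clique of size `k` iff `H` has a dominating set of size
`k + C(k,2)`. -/
theorem clique_iff_dominatingSet {V : Type*} [Fintype V] [DecidableEq V]
    (G : SimpleGraph V) [DecidableRel G.Adj] (hE : G.edgeSet.Nonempty) (k : ℕ) (hk : 2 ≤ k) :
    (∃ s : Finset V, G.IsNClique k s) ↔
      ∃ D : Finset (HVert G k), D.card = k + k.choose 2 ∧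
        ∀ w : HVert G k, w ∈ D ∨ ∃ d ∈ D, (HGraph G k).Adj d w := by
  classical
  constructor
  · -- forward direction
    rintro ⟨s, hs⟩
    set f : Fin k → V := fun i => (s.equivFin.symm (Fin.cast hs.card_eq.symm i) : V) with hfdef
    have hfmem : ∀ i, f i ∈ s := fun i => (s.equivFin.symm (Fin.cast hs.card_eq.symm i)).2
    have hfinj : Function.Injective f := by
      intro i j h
      have := Subtype.ext h
      have := s.equivFin.symm.injective this
      exact Fin.cast_injective _ this
    have hfadj : ∀ i j : Fin k, i ≠ j → G.Adj (f i) (f j) := fun i j hij =>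
      hs.isClique (hfmem i) (hfmem j) (fun h => hij (hfinj h))
    set A : Finset (HVert G k) :=
      Finset.univ.image fun i : Fin k => (Sum.inl (i, some (f i)) : HVert G k) with hA
    set B : Finset (HVert G k) :=
      Finset.univ.image fun p : IdxPair k =>
        (Sum.inr (Sum.inr (p, some ⟨s(f p.1.1, f p.1.2),
          G.mem_edgeSet.mpr (hfadj _ _ (ne_of_lt p.2))⟩)) : HVert G k) with hB
    have hAmem : ∀ i : Fin k, (Sum.inl (i, some (f i)) : HVert G k) ∈ A := by
      intro i; rw [hA]; exact Finset.mem_image_of_mem _ (Finset.mem_univ i)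
    have hBmem : ∀ p : IdxPair k,
        (Sum.inr (Sum.inr (p, some ⟨s(f p.1.1, f p.1.2),
          G.mem_edgeSet.mpr (hfadj _ _ (ne_of_lt p.2))⟩)) : HVert G k) ∈ B := by
      intro p; rw [hB]; exact Finset.mem_image_of_mem _ (Finset.mem_univ p)
    refine ⟨A ∪ B, ?_, ?_⟩
    · have hdisj : Disjoint A B := by
        rw [Finset.disjoint_left]
        rintro x hxA hxB
        rw [hA, Finset.mem_image] at hxA
        rw [hB, Finset.mem_image] at hxB
        obtain ⟨i, -, rfl⟩ := hxA
        obtain ⟨p, -, h⟩ := hxB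
        exact nomatch h
      rw [Finset.card_union_of_disjoint hdisj]
      have hcA : A.card = k := by
        rw [hA, Finset.card_image_of_injective _ (fun i j h => by
          simpa using (Prod.ext_iff.mp (Sum.inl.inj h)).1), Finset.card_univ, Fintype.card_fin]
      have hcB : B.card = k.choose 2 := by
        rw [hB, Finset.card_image_of_injective _ (fun p q h => by
          have := Sum.inr.inj h
          have := Sum.inr.inj this
          exact (Prod.ext_iff.mp this).1), Finset.card_univ, card_idxPair]
      rw [hcA, hcB]
    · intro w
      rcases w with ⟨i, x⟩ | ⟨⟨p, u, v⟩ | ⟨p, y⟩⟩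
      · by_cases hw : (Sum.inl (i, x) : HVert G k) ∈ A ∪ B
        · exact Or.inl hw
        · refine Or.inr ⟨Sum.inl (i, some (f i)), Finset.mem_union_left _ (hAmem i), ?_⟩
          rw [HGraph, SimpleGraph.fromRel_adj]
          exact ⟨fun h => hw (h ▸ Finset.mem_union_left _ (hAmem i)), Or.inl (by simp [Hrel])⟩
      · by_cases h1 : u = f p.1.1
        · by_cases h2 : v = f p.1.2
          · refine Or.inr ⟨_, Finset.mem_union_right _ (hBmem p), ?_⟩
            rw [HGraph, SimpleGraph.fromRel_adj]
            refine ⟨fun h => (nomatch h), Or.inr ?_⟩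
            simp only [Hrel]
            exact ⟨by trivial, by rw [h1, h2]⟩
          · refine Or.inr ⟨Sum.inl (p.1.2, some (f p.1.2)),
              Finset.mem_union_left _ (hAmem p.1.2), ?_⟩
            rw [HGraph, SimpleGraph.fromRel_adj]
            refine ⟨fun h => (nomatch h), Or.inr ?_⟩
            simp only [Hrel]
            exact Or.inr ⟨by trivial, fun h => h2 h.symm⟩
        · refine Or.inr ⟨Sum.inl (p.1.1, some (f p.1.1)),
            Finset.mem_union_left _ (hAmem p.1.1), ?_⟩
          rw [HGraph, SimpleGraph.fromRel_adj]
          refine ⟨fun h => (nomatch h), Or.inr ?_⟩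
          simp only [Hrel]
          exact Or.inl ⟨by trivial, fun h => h1 h.symm⟩
      · by_cases hw : (Sum.inr (Sum.inr (p, y)) : HVert G k) ∈ A ∪ B
        · exact Or.inl hw
        · refine Or.inr ⟨_, Finset.mem_union_right _ (hBmem p), ?_⟩
          rw [HGraph, SimpleGraph.fromRel_adj]
          exact ⟨fun h => hw (h ▸ Finset.mem_union_right _ (hBmem p)),
            Or.inl (by simp [Hrel])⟩
  · -- backward direction
    rintro ⟨D, hcard, hdom⟩
    obtain ⟨a, b, hab⟩ : ∃ a b : V, G.Adj a b := by
      obtain ⟨e0, he0⟩ := hE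
      induction e0 using Sym2.ind with
      | _ a b => exact ⟨a, b, G.mem_edgeSet.mp he0⟩
    have hne_ab : a ≠ b := G.ne_of_adj hab
    -- every class contains an element of D
    have hclass : ∀ c : Fin k ⊕ IdxPair k, ∃ d ∈ D, cls G k d = some c := by
      rintro (i | p)
      · rcases hdom (Sum.inl (i, none)) with h | ⟨d, hd, hadj⟩
        · exact ⟨_, h, rfl⟩
        · refine ⟨d, hd, ?_⟩
          rw [HGraph, SimpleGraph.fromRel_adj] at hadj
          obtain ⟨-, hrel⟩ := hadj
          rcases d with ⟨i', x⟩ | ⟨⟨p', u', v'⟩ | ⟨p', y⟩⟩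
          · rcases hrel with h | h <;> simp only [Hrel] at h <;> simp [cls, h]
          · rcases hrel with h | h <;> simp only [Hrel] at h
          · rcases hrel with h | h <;> simp only [Hrel] at h
      · rcases hdom (Sum.inr (Sum.inr (p, none))) with h | ⟨d, hd, hadj⟩
        · exact ⟨_, h, rfl⟩
        · refine ⟨d, hd, ?_⟩
          rw [HGraph, SimpleGraph.fromRel_adj] at hadj
          obtain ⟨-, hrel⟩ := hadj
          rcases d with ⟨i', x⟩ | ⟨⟨p', u', v'⟩ | ⟨p', y⟩⟩
          · rcases hrel with h | h <;> simp only [Hrel] at h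
          · rcases hrel with h | h <;> simp only [Hrel] at h
          · rcases hrel with h | h <;> simp only [Hrel] at h <;> simp [cls, h]
      -- pick a representative in each class
    have hgD : ∀ c : Fin k ⊕ IdxPair k, (hclass c).choose ∈ D := fun c =>
      (hclass c).choose_spec.1
    set g : (Fin k ⊕ IdxPair k) → HVert G k := fun c => (hclass c).choose with hgdef
    have hgc : ∀ c, cls G k (g c) = some c := fun c => (hclass c).choose_spec.2
    have hginj : Function.Injective g := by
      intro c c' h
      have h1 := hgc c
      rw [h, hgc c'] at h1
      exact (Option.some_injective _ h1).symm
    have himg : Finset.image g Finset.univ = D := by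
      apply Finset.eq_of_subset_of_card_le
      · intro x hx
        rw [Finset.mem_image] at hx
        obtain ⟨c, -, rfl⟩ := hx
        exact hgD c
      · rw [Finset.card_image_of_injective _ hginj, Finset.card_univ, Fintype.card_sum,
          Fintype.card_fin, card_idxPair, hcard]
    have hmemD : ∀ d ∈ D, ∃ c, g c = d := by
      intro d hd
      rw [← himg, Finset.mem_image] at hd
      obtain ⟨c, -, hc⟩ := hd
      exact ⟨c, hc⟩
    have hb : ∀ t : IdxPair k × V × V, (Sum.inr (Sum.inl t) : HVert G k) ∉ D := by
      rintro ⟨p, u, v⟩ ht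
      obtain ⟨c, hc⟩ := hmemD _ ht
      have := hgc c
      rw [hc] at this
      simp [cls] at this
    have huniq : ∀ d ∈ D, ∀ d' ∈ D, cls G k d = cls G k d' → d = d' := by
      intro d hd d' hd' h
      obtain ⟨c, rfl⟩ := hmemD d hd
      obtain ⟨c', rfl⟩ := hmemD d' hd'
      rw [hgc, hgc] at h
      rw [Option.some_injective _ h]
    have shape1 : ∀ i : Fin k, ∃ x, g (Sum.inl i) = Sum.inl (i, x) := by
      intro i
      have h := hgc (Sum.inl i)
      rcases hge : g (Sum.inl i) with ⟨i', x⟩ | ⟨⟨p', u', v'⟩ | ⟨p', y⟩⟩ <;>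
        rw [hge] at h <;> simp only [cls, Option.some.injEq] at h
      · cases h; exact ⟨x, rfl⟩
      · exact absurd h (by simp)
      · exact absurd h (by simp)
    have shape2 : ∀ p : IdxPair k, ∃ y, g (Sum.inr p) = Sum.inr (Sum.inr (p, y)) := by
      intro p
      have h := hgc (Sum.inr p)
      rcases hge : g (Sum.inr p) with ⟨i', x⟩ | ⟨⟨p', u', v'⟩ | ⟨p', y⟩⟩ <;>
        rw [hge] at h <;> simp only [cls, Option.some.injEq] at h
      · exact absurd h (by simp)
      · exact absurd h (by simp)
      · cases (Sum.inr.inj h : (p' : IdxPair k) = p); exact ⟨y, rfl⟩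
    -- the key pair lemma
    have key : ∀ p : IdxPair k, ∃ w1 w2, (Sum.inl (p.1.1, some w1) : HVert G k) ∈ D ∧
        (Sum.inl (p.1.2, some w2) : HVert G k) ∈ D ∧ G.Adj w1 w2 := by
      intro p
      obtain ⟨x1, hx1⟩ := shape1 p.1.1
      obtain ⟨x2, hx2⟩ := shape1 p.1.2
      obtain ⟨y, hy⟩ := shape2 p
      have hij : p.1.1 ≠ p.1.2 := ne_of_lt p.2
      have hdom3 : ∀ u v : V,
          (∃ w', x1 = some w' ∧ w' ≠ u) ∨ (∃ w', x2 = some w' ∧ w' ≠ v) ∨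
          (∃ e : G.edgeSet, y = some e ∧ (e : Sym2 V) = s(u, v)) := by
        intro u v
        rcases hdom (Sum.inr (Sum.inl (p, u, v))) with h | ⟨d, hd, hadj⟩
        · exact absurd h (hb _)
        · obtain ⟨c, rfl⟩ := hmemD d hd
          rw [HGraph, SimpleGraph.fromRel_adj] at hadj
          obtain ⟨-, hrel⟩ := hadj
          rcases c with i' | p'
          · obtain ⟨x, hx⟩ := shape1 i'
            rw [hx] at hrel
            rcases x with _ | w'
            · rcases hrel with h | h <;> simp only [Hrel] at h
            · rcases hrel with h | h
              · simp only [Hrel] at h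
              · simp only [Hrel] at h
                rcases h with ⟨h1, hw⟩ | ⟨h1, hw⟩
                · subst h1
                  rw [hx1] at hx
                  cases (Prod.ext_iff.mp (Sum.inl.inj hx)).2
                  exact Or.inl ⟨w', rfl, hw⟩
                · subst h1
                  rw [hx2] at hx
                  cases (Prod.ext_iff.mp (Sum.inl.inj hx)).2
                  exact Or.inr (Or.inl ⟨w', rfl, hw⟩)
          · obtain ⟨y', hy'⟩ := shape2 p'
            rw [hy'] at hrel
            rcases y' with _ | e
            · rcases hrel with h | h <;> simp only [Hrel] at h
            · rcases hrel with h | h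
              · simp only [Hrel] at h
              · simp only [Hrel] at h
                obtain ⟨h1, he⟩ := h
                subst h1
                rw [hy] at hy'
                cases (Prod.ext_iff.mp (Sum.inr.inj (Sum.inr.inj hy'))).2
                exact Or.inr (Or.inr ⟨e, rfl, he⟩)
      have hx1s : ∃ w1, x1 = some w1 := by
        rcases hx1c : x1 with _ | w1
        · exfalso
          rcases hx2c : x2 with _ | w2
          · have h1 := hdom3 a a
            have h2 := hdom3 a b
            rw [hx1c, hx2c] at h1 h2
            rcases h1 with ⟨w', hw', -⟩ | ⟨w', hw', -⟩ | ⟨e1, hy1, he1⟩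
            · exact nomatch hw'
            · exact nomatch hw'
            rcases h2 with ⟨w', hw', -⟩ | ⟨w', hw', -⟩ | ⟨e2, hy2, he2⟩
            · exact nomatch hw'
            · exact nomatch hw'
            rw [hy1] at hy2
            cases Option.some_injective _ hy2
            rw [he1] at he2
            rw [Sym2.eq_iff] at he2
            rcases he2 with ⟨-, h⟩ | ⟨h, -⟩ <;> exact hne_ab h
          · have h1 := hdom3 a w2
            have h2 := hdom3 b w2
            rw [hx1c, hx2c] at h1 h2
            rcases h1 with ⟨w', hw', -⟩ | ⟨w', hw', hww⟩ | ⟨e1, hy1, he1⟩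
            · exact nomatch hw'
            · exact hww (Option.some.inj hw').symm
            rcases h2 with ⟨w', hw', -⟩ | ⟨w', hw', hww⟩ | ⟨e2, hy2, he2⟩
            · exact nomatch hw'
            · exact hww (Option.some.inj hw').symm
            rw [hy1] at hy2
            cases Option.some_injective _ hy2
            rw [he1] at he2
            rw [Sym2.eq_iff] at he2
            rcases he2 with ⟨h, -⟩ | ⟨h1', h2'⟩
            · exact hne_ab h
            · exact hne_ab (h1'.trans h2')
        · exact ⟨w1, rfl⟩
      obtain ⟨w1, hw1⟩ := hx1s
      have hx2s : ∃ w2, x2 = some w2 := by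
        rcases hx2c : x2 with _ | w2
        · exfalso
          have h1 := hdom3 w1 a
          have h2 := hdom3 w1 b
          rw [hw1, hx2c] at h1 h2
          rcases h1 with ⟨w', hw', hww⟩ | ⟨w', hw', -⟩ | ⟨e1, hy1, he1⟩
          · exact hww (Option.some.inj hw').symm
          · exact nomatch hw'
          rcases h2 with ⟨w', hw', hww⟩ | ⟨w', hw', -⟩ | ⟨e2, hy2, he2⟩
          · exact hww (Option.some.inj hw').symm
          · exact nomatch hw'
          rw [hy1] at hy2
          cases Option.some_injective _ hy2
          rw [he1] at he2
          rw [Sym2.eq_iff] at he2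
          rcases he2 with ⟨-, h⟩ | ⟨h1', h2'⟩
          · exact hne_ab h
          · exact hne_ab (h2'.trans h1')
        · exact ⟨w2, rfl⟩
      obtain ⟨w2, hw2⟩ := hx2s
      have h3 := hdom3 w1 w2
      rw [hw1, hw2] at h3
      rcases h3 with ⟨w', hw', hww⟩ | ⟨w', hw', hww⟩ | ⟨e, -, he⟩
      · exact absurd (Option.some.inj hw').symm hww
      · exact absurd (Option.some.inj hw').symm hww
      · refine ⟨w1, w2, ?_, ?_, ?_⟩
        · rw [← hw1, ← hx1]; exact hgD _
        · rw [← hw2, ← hx2]; exact hgD _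
        · exact G.mem_edgeSet.mp (he ▸ e.2)
    -- construct the clique
    have hsome : ∀ i : Fin k, ∃ w, (Sum.inl (i, some w) : HVert G k) ∈ D := by
      intro i
      obtain ⟨j, hj⟩ : ∃ j : Fin k, j ≠ i :=
        Fintype.exists_ne_of_one_lt_card (by simp; omega) i
      rcases lt_or_gt_of_ne hj with h | h
      · obtain ⟨w1, w2, h1, h2, -⟩ := key ⟨(j, i), h⟩
        exact ⟨w2, h2⟩
      · obtain ⟨w1, w2, h1, h2, -⟩ := key ⟨(i, j), h⟩
        exact ⟨w1, h1⟩
    choose f hf using hsome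
    have hadjf : ∀ i j : Fin k, i < j → G.Adj (f i) (f j) := by
      intro i j hij
      obtain ⟨w1, w2, h1, h2, hadj⟩ := key ⟨(i, j), hij⟩
      have e1 : (Sum.inl (i, some w1) : HVert G k) = Sum.inl (i, some (f i)) :=
        huniq _ h1 _ (hf i) rfl
      have e2 : (Sum.inl (j, some w2) : HVert G k) = Sum.inl (j, some (f j)) :=
        huniq _ h2 _ (hf j) rfl
      cases Option.some_injective _ (Prod.ext_iff.mp (Sum.inl.inj e1)).2
      cases Option.some_injective _ (Prod.ext_iff.mp (Sum.inl.inj e2)).2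
      exact hadj
    have hfinj : Function.Injective f := by
      intro i j h
      by_contra hne
      rcases lt_or_gt_of_ne hne with hlt | hlt
      · exact (hadjf i j hlt).ne h
      · exact (hadjf j i hlt).ne h.symm
    refine ⟨Finset.image f Finset.univ, ?_, ?_⟩
    · intro x hx y hy hxy
      simp only [Finset.coe_image, Finset.coe_univ, Set.image_univ, Set.mem_range] at hx hy
      obtain ⟨i, rfl⟩ := hx
      obtain ⟨j, rfl⟩ := hy
      have hij : i ≠ j := fun h => hxy (by rw [h])
      rcases lt_or_gt_of_ne hij with h | h
      · exact hadjf i j h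
      · exact (hadjf j i h).symm
    · rw [Finset.card_image_of_injective _ hfinj, Finset.card_univ, Fintype.card_fin]
end

section
/- Suppose there is a computable function assigning to every nondeterministic Turing machine M a sentence ψ_M of first-order logic in the vocabulary {<, +} together with computable n₀(M), p₀(M) ∈ ℕ with p₀(M) ≥ 1, such that: (a) for all n ∈ ℕ, M accepts the empty input in at most n steps if and only if ([n], <, +) ⊨ ψ_M, and (b) for all n ≥ n₀(M), ([n], <, +) ⊨ ψ_M iff ([n + p₀(M)], <, +) ⊨ ψ_M. Then the halting problem for nondeterministic Turing machines on empty input is decidable. -/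
open FirstOrder

/-- The first-order language with a binary relation `<` and a ternary relation `+`. -/
def Lpa : Language :=
  ⟨fun _ => Empty, fun n => match n with | 2 => Unit | 3 => Unit | _ => Empty⟩

instance : ∀ n, Encodable (Lpa.Functions n) := fun _ => inferInstanceAs (Encodable Empty)

instance : ∀ n, Encodable (Lpa.Relations n)
  | 0 => inferInstanceAs (Encodable Empty)
  | 1 => inferInstanceAs (Encodable Empty)
  | 2 => inferInstanceAs (Encodable Unit)
  | 3 => inferInstanceAs (Encodable Unit)
  | (_ + 4) => inferInstanceAs (Encodable Empty)

/-- The structure `([n], <, +)`, realized on `Fin n` (where `i : Fin n` represents `i + 1`):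
`<` is the natural order and `+` is the ternary relation `{(a,b,c) : a + b = c}` on `[n]`. -/
instance finPAStructure (n : ℕ) : Lpa.Structure (Fin n) where
  funMap := fun {_} f _ => Empty.elim f
  RelMap := fun {l} =>
    match l with
    | 2 => fun _ v => v 0 < v 1
    | 3 => fun _ v => (v 0 : ℕ) + (v 1 : ℕ) + 1 = (v 2 : ℕ)
    | 0 => fun r _ => Empty.elim r
    | 1 => fun r _ => Empty.elim r
    | (_ + 4) => fun r _ => Empty.elim r

/-- If there is a computable assignment of `{<,+}`-sentences `ψ_M` (together with computable
`n₀(M)` and `p₀(M) ≥ 1`) such that (a) `M` accepts the empty input within `n` steps iff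
`([n],<,+) ⊨ ψ_M`, and (b) for `n ≥ n₀(M)` the truth of `ψ_M` in `([n],<,+)` and
`([n+p₀(M)],<,+)` coincide, then the halting problem on empty input is decidable. -/
theorem halting_decidable_of_FO_plus
    (ψ : Nat.Partrec.Code → Lpa.Sentence) (n₀ p₀ : Nat.Partrec.Code → ℕ)
    (hψ : Computable fun c => Encodable.encode ((ψ c).listEncode))
    (hn₀ : Computable n₀) (hp₀ : Computable p₀) (hp₀pos : ∀ c, 1 ≤ p₀ c)
    (ha : ∀ (c : Nat.Partrec.Code) (n : ℕ),
      (Nat.Partrec.Code.evaln n c 0).isSome ↔ (Fin n) ⊨ ψ c)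
    (hb : ∀ (c : Nat.Partrec.Code) (n : ℕ), n₀ c ≤ n →
      ((Fin n) ⊨ ψ c ↔ (Fin (n + p₀ c)) ⊨ ψ c)) :
    ComputablePred fun c : Nat.Partrec.Code => ∃ n, (Nat.Partrec.Code.evaln n c 0).isSome := by

  classical
  have key : ∀ c : Nat.Partrec.Code,
      (∃ n, (Nat.Partrec.Code.evaln n c 0).isSome) ↔
        (Nat.Partrec.Code.evaln (n₀ c) c 0).isSome := by
    intro c
    constructor
    · rintro ⟨n, hn⟩
      -- periodicity: Fin (n₀ c + j * p₀ c) ⊨ ψ c ↔ Fin (n₀ c) ⊨ ψ c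
      have per : ∀ j : ℕ, ((Fin (n₀ c)) ⊨ ψ c ↔ (Fin (n₀ c + j * p₀ c)) ⊨ ψ c) := by
        intro j
        induction j with
        | zero =>
          have e : n₀ c + 0 * p₀ c = n₀ c := by ring
          rw [e]
        | succ j ih =>
          have h := hb c (n₀ c + j * p₀ c) (Nat.le_add_right _ _)
          have e : n₀ c + j * p₀ c + p₀ c = n₀ c + (j + 1) * p₀ c := by ring
          rw [ih, h, e]
      -- choose j with n ≤ n₀ c + j * p₀ c
      have hp := hp₀pos c
      have hle : n ≤ n₀ c + n * p₀ c :=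
        le_trans (le_trans (Nat.le_mul_of_pos_right n hp) (Nat.le_add_left _ _)) (le_refl _)
      have hsome : (Nat.Partrec.Code.evaln (n₀ c + n * p₀ c) c 0).isSome := by
        obtain ⟨x, hx⟩ := Option.isSome_iff_exists.1 hn
        exact Option.isSome_iff_exists.2 ⟨x, Nat.Partrec.Code.evaln_mono hle hx⟩
      have := (ha c (n₀ c + n * p₀ c)).1 hsome
      exact (ha c (n₀ c)).2 ((per n).2 this)
    · exact fun h => ⟨n₀ c, h⟩
  have hf : Computable fun c : Nat.Partrec.Code =>
      (Nat.Partrec.Code.evaln (n₀ c) c 0).isSome := by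
    have h1 : Primrec fun a : (ℕ × Nat.Partrec.Code) × ℕ =>
        Nat.Partrec.Code.evaln a.1.1 a.1.2 a.2 := Nat.Partrec.Code.primrec_evaln
    have h2 : Computable fun c : Nat.Partrec.Code =>
        Nat.Partrec.Code.evaln (n₀ c) c 0 :=
      h1.to_comp.comp ((hn₀.pair Computable.id).pair (Computable.const 0))
    exact (Primrec.option_isSome.to_comp).comp h2
  exact ⟨inferInstance, by
    simpa [key] using hf⟩
end

section
/- Fix k ≥ 1 and a vertex set V of size n. If C = {u₁,...,u_k} is a k-clique in a graph G = (V, E), then in the graph H constructed in the clique-to-dominating-set reduction, the set D(C) := {u₁(1),...,u_k(k)} ∪ {{u_i,u_j}(i,j) : 1 ≤ i < j ≤ k} is a dominating set of H of size k + C(k,2). -/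
/-- Forward direction of the reduction: if `u₁,…,u_k` form a `k`-clique in `G`, then
`D(C) = {u₁(1),…,u_k(k)} ∪ {{u_i,u_j}(i,j) : i < j}` is a dominating set of `H` of size
`k + C(k,2)`. -/
theorem clique_gives_dominatingSet {V : Type*} [Fintype V] [DecidableEq V] (n : ℕ)
    (hV : Fintype.card V = n) (G : SimpleGraph V) (k : ℕ) (hk : 1 ≤ k)
    (u : Fin k → V) (huinj : Function.Injective u)
    (hclique : ∀ i j : Fin k, i ≠ j → G.Adj (u i) (u j)) :
    ((({x : HVert G k | (∃ i : Fin k, x = Sum.inl (i, some (u i))) ∨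
        ∃ (p : IdxPair k) (h : s(u p.1.1, u p.1.2) ∈ G.edgeSet),
          x = Sum.inr (Sum.inr (p, some ⟨s(u p.1.1, u p.1.2), h⟩))}).ncard
        = k + k.choose 2) ∧
      ∀ w : HVert G k,
        w ∈ {x : HVert G k | (∃ i : Fin k, x = Sum.inl (i, some (u i))) ∨
          ∃ (p : IdxPair k) (h : s(u p.1.1, u p.1.2) ∈ G.edgeSet),
            x = Sum.inr (Sum.inr (p, some ⟨s(u p.1.1, u p.1.2), h⟩))} ∨
        ∃ d ∈ {x : HVert G k | (∃ i : Fin k, x = Sum.inl (i, some (u i))) ∨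
          ∃ (p : IdxPair k) (h : s(u p.1.1, u p.1.2) ∈ G.edgeSet),
            x = Sum.inr (Sum.inr (p, some ⟨s(u p.1.1, u p.1.2), h⟩))},
          (HGraph G k).Adj d w) := by
  have hedge : ∀ p : IdxPair k, s(u p.1.1, u p.1.2) ∈ G.edgeSet := fun p =>
    (SimpleGraph.mem_edgeSet G).2 (hclique p.1.1 p.1.2 (fun h => (ne_of_lt p.2) (by rw [h])))
  set f : Fin k → HVert G k := fun i => Sum.inl (i, some (u i)) with hf
  set g : IdxPair k → HVert G k :=
    fun p => Sum.inr (Sum.inr (p, some ⟨s(u p.1.1, u p.1.2), hedge p⟩)) with hg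
  set S : Set (HVert G k) :=
    {x : HVert G k | (∃ i : Fin k, x = Sum.inl (i, some (u i))) ∨
      ∃ (p : IdxPair k) (h : s(u p.1.1, u p.1.2) ∈ G.edgeSet),
        x = Sum.inr (Sum.inr (p, some ⟨s(u p.1.1, u p.1.2), h⟩))} with hSdef
  have hfmem : ∀ i, f i ∈ S := fun i => Or.inl ⟨i, rfl⟩
  have hgmem : ∀ p, g p ∈ S := fun p => Or.inr ⟨p, hedge p, rfl⟩
  constructor
  · -- cardinality
    have hS : S = Set.range f ∪ Set.range g := by
      ext x
      simp only [hSdef, Set.mem_setOf_eq, Set.mem_union, Set.mem_range]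
      apply or_congr
      · exact ⟨fun ⟨i, h⟩ => ⟨i, h.symm⟩, fun ⟨i, h⟩ => ⟨i, h.symm⟩⟩
      · constructor
        · rintro ⟨p, h, rfl⟩; exact ⟨p, rfl⟩
        · rintro ⟨p, rfl⟩; exact ⟨p, hedge p, rfl⟩
    have hfinj : Function.Injective f := by
      intro i i' h
      injection h with h
      injection h with h1 h2
      try exact h1
    have hginj : Function.Injective g := by
      intro p p' h
      injection h with h
      injection h with h
      injection h with h1 h2
      try exact h1
    have hdisj : Disjoint (Set.range f) (Set.range g) := by
      rw [Set.disjoint_left]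
      rintro x ⟨i, rfl⟩ ⟨p, hp⟩
      exact Sum.inr_ne_inl hp
    rw [hS, Set.ncard_union_eq hdisj (Set.finite_range f) (Set.finite_range g)]
    have h1 : (Set.range f).ncard = k := by
      rw [← Nat.card_coe_set_eq, Nat.card_range_of_injective hfinj,
        Nat.card_eq_fintype_card, Fintype.card_fin]
    have h2 : (Set.range g).ncard = k.choose 2 := by
      rw [← Nat.card_coe_set_eq, Nat.card_range_of_injective hginj,
        Nat.card_eq_fintype_card, card_idxPair]
    rw [h1, h2]
  · -- domination
    intro w
    have adj_of : ∀ d : HVert G k, d ≠ w → (Hrel G k d w ∨ Hrel G k w d) →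
        (HGraph G k).Adj d w := by
      intro d hne hr
      exact (SimpleGraph.fromRel_adj _ _ _).2 ⟨hne, hr⟩
    rcases w with ⟨i, ov⟩ | (⟨p, v1, v2⟩ | ⟨p, oe⟩)
    · by_cases hov : ov = some (u i)
      · exact Or.inl (Or.inl ⟨i, by rw [hov]⟩)
      · refine Or.inr ⟨f i, hfmem i, adj_of _ ?_ (Or.inl ?_)⟩
        · intro h
          injection h with h
          injection h with h1 h2
          exact hov h2.symm
        · exact rfl
    · -- the pair gadget vertices
      by_cases h1 : v1 = u p.1.1
      · by_cases h2 : v2 = u p.1.2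
        · refine Or.inr ⟨g p, hgmem p, adj_of _ (fun h => Sum.inr_ne_inl (Sum.inr.inj h)) (Or.inr ?_)⟩
          show p = p ∧ (s(u p.1.1, u p.1.2) : Sym2 V) = s(v1, v2)
          rw [h1, h2]; exact ⟨rfl, rfl⟩
        · refine Or.inr ⟨f p.1.2, hfmem p.1.2, adj_of _ (fun h => Sum.inl_ne_inr h) (Or.inr ?_)⟩
          show (p.1.2 = p.1.1 ∧ u p.1.2 ≠ v1) ∨ (p.1.2 = p.1.2 ∧ u p.1.2 ≠ v2)
          exact Or.inr ⟨rfl, fun h => h2 h.symm⟩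
      · refine Or.inr ⟨f p.1.1, hfmem p.1.1, adj_of _ (fun h => Sum.inl_ne_inr h) (Or.inr ?_)⟩
        show (p.1.1 = p.1.1 ∧ u p.1.1 ≠ v1) ∨ (p.1.1 = p.1.2 ∧ u p.1.1 ≠ v2)
        exact Or.inl ⟨rfl, fun h => h1 h.symm⟩
    · by_cases hoe : oe = some ⟨s(u p.1.1, u p.1.2), hedge p⟩
      · exact Or.inl (Or.inr ⟨p, hedge p, by rw [hoe]⟩)
      · refine Or.inr ⟨g p, hgmem p, adj_of _ ?_ (Or.inl rfl)⟩
        intro h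
        injection h with h
        injection h with h
        injection h with h1 h2
        exact hoe h2.symm
end
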